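/- Let C be a category with a left square structure Q (an oplax monoidal functor from the cube category □ to endofunctors of C, with structure maps α_{n,m} : Q_{n+m} → Q_n ∘ Q_m and β : Q_0 → Id satisfying coassociativity and counit axioms). Then the assignment C^Q(X,Y)_n = Hom_C(Q_n X, Y), with composition sending (f : Q_n Y → Z, g : Q_m X → Y) to f ∘ Q_n(g) ∘ α_{n,m} : Q_{n+m} X → Z and units given by β(X), defines a category enriched in cubical sets. -/
import Mathlib


open CategoryTheory Limits MonoidalCategory

namespace Paper

/-- The underlying "product" of two maps of cubes. -/
def prodFun {n m n' m' : ℕ} (f : (Fin n → Bool) → (Fin n' → Bool))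
    (g : (Fin m → Bool) → (Fin m' → Bool)) :
    (Fin (n + m) → Bool) → (Fin (n' + m') → Bool) :=
  fun v j => Fin.addCases (fun j1 => f (fun i => v (Fin.castAdd m i)) j1)
    (fun j2 => g (fun i => v (Fin.natAdd n i)) j2) j

/-- The maps of posets `{0<1}^n → {0<1}^m` that are generated under composition and
products by the cofaces `δ⁰, δ¹ : * → {0<1}` and the codegeneracy `σ : {0<1} → *`. -/
inductive IsCubeMap : ∀ {n m : ℕ}, ((Fin n → Bool) → (Fin m → Bool)) → Prop
  | id (n : ℕ) : IsCubeMap (fun v : Fin n → Bool => v)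
  | comp {n m k : ℕ} {f : (Fin n → Bool) → (Fin m → Bool)}
      {g : (Fin m → Bool) → (Fin k → Bool)} :
      IsCubeMap f → IsCubeMap g → IsCubeMap (g ∘ f)
  | prod {n m n' m' : ℕ} {f : (Fin n → Bool) → (Fin n' → Bool)}
      {g : (Fin m → Bool) → (Fin m' → Bool)} :
      IsCubeMap f → IsCubeMap g → IsCubeMap (prodFun f g)
  | delta (b : Bool) : IsCubeMap (fun (_ : Fin 0 → Bool) (_ : Fin 1) => b)
  | sigma : IsCubeMap (fun (_ : Fin 1 → Bool) (i : Fin 0) => i.elim0)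

/-- The category of cubes: objects are the posets `{0<1}^n`, morphisms are the maps
generated by cofaces and codegeneracies. -/
abbrev Cube := ℕ

instance : Category Cube where
  Hom n m := {f : (Fin n → Bool) → (Fin m → Bool) // IsCubeMap f}
  id n := ⟨fun v => v, IsCubeMap.id n⟩
  comp f g := ⟨g.1 ∘ f.1, IsCubeMap.comp f.2 g.2⟩

/-- The product (tensor) of two morphisms of cubes. -/
def prodHom {n n' m m' : Cube} (f : n ⟶ n') (g : m ⟶ m') :
    ((n + m : ℕ) : Cube) ⟶ ((n' + m' : ℕ) : Cube) :=
  ⟨prodFun f.1 g.1, IsCubeMap.prod f.2 g.2⟩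

/-- The coface `δᵇ : {0<1}⁰ → {0<1}`. -/
def deltaHom (b : Bool) : (0 : Cube) ⟶ (1 : Cube) :=
  ⟨fun _ _ => b, IsCubeMap.delta b⟩

/-- The codegeneracy `σ : {0<1} → {0<1}⁰`. -/
def sigmaHom : (1 : Cube) ⟶ (0 : Cube) :=
  ⟨fun _ i => i.elim0, IsCubeMap.sigma⟩

end Paper

namespace Paper

universe v u

variable (C : Type u) [Category.{v} C]

/-- The data of a left square structure on `C`: a functor `□ ⥤ Fun(C,C)` together with
oplax structure maps `α : Q_{n+m} ⟶ Q_n ∘ Q_m` and `β : Q_0 ⟶ Id`. -/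
structure LSqData where
  Q : Cube ⥤ C ⥤ C
  α : ∀ n m : Cube, Q.obj ((n + m : ℕ) : Cube) ⟶ Q.obj m ⋙ Q.obj n
  β : Q.obj (0 : Cube) ⟶ 𝟭 C

variable {C}

/-- The axioms of a left square structure (an oplax module over the monoid `□`):
naturality of `α` in both cube variables, coassociativity, and the two counit laws. -/
structure LSqData.IsLSq (S : LSqData C) : Prop where
  natural : ∀ {n n' m m' : Cube} (φ : n ⟶ n') (ψ : m ⟶ m') (X : C),
    (S.Q.map (prodHom φ ψ)).app X ≫ (S.α n' m').app X =
      (S.α n m).app X ≫ (S.Q.map φ).app ((S.Q.obj m).obj X) ≫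
        (S.Q.obj n').map ((S.Q.map ψ).app X)
  coassoc : ∀ (n m l : Cube) (X : C),
    (S.α ((n + m : ℕ) : Cube) l).app X ≫ (S.α n m).app ((S.Q.obj l).obj X) =
      (S.Q.map (eqToHom (Nat.add_assoc n m l))).app X ≫
        (S.α n ((m + l : ℕ) : Cube)).app X ≫ (S.Q.obj n).map ((S.α m l).app X)
  counit_right : ∀ (n : Cube) (X : C),
    (S.α n 0).app X ≫ (S.Q.obj n).map (S.β.app X) = 𝟙 _
  counit_left : ∀ (n : Cube) (X : C),
    (S.α 0 n).app X ≫ S.β.app ((S.Q.obj n).obj X) =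
      (S.Q.map (eqToHom (Nat.zero_add n))).app X

end Paper

namespace Paper

universe v u

variable {C : Type u} [Category.{v} C] (S : LSqData C)

/-- The composition of the cubically enriched category `C^Q`:
an `n`-cube `f : Q_n Y ⟶ Z` composed with an `m`-cube `g : Q_m X ⟶ Y` is the
`(n+m)`-cube `f ∘ Q_n(g) ∘ α_{n,m} : Q_{n+m} X ⟶ Z`. -/
def sqComp {X Y Z : C} {n m : Cube}
    (f : (S.Q.obj n).obj Y ⟶ Z) (g : (S.Q.obj m).obj X ⟶ Y) :
    (S.Q.obj ((n + m : ℕ) : Cube)).obj X ⟶ Z :=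
  (S.α n m).app X ≫ (S.Q.obj n).map g ≫ f

/-- The identity `0`-cube of `X` in `C^Q`. -/
def sqId (X : C) : (S.Q.obj (0 : Cube)).obj X ⟶ X := S.β.app X

/-- If `S` is a left square structure on `C`, then the cubical sets
`C^Q(X,Y)ₙ = Hom_C(Q_n X, Y)` — with functorial action `f ↦ f ∘ Q_φ`, composition
`sqComp` and units `sqId` — form a category enriched in cubical sets: composition is
compatible with the cubical structure (i.e. is a map of cubical sets defined on the
Day convolution tensor product), is associative, and is unital. -/
theorem stmt5 (hS : S.IsLSq) :
    -- compatibility with the cubical set structure in both variables: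
    (∀ {X Y Z : C} {n n' m m' : Cube} (φ : n' ⟶ n) (ψ : m' ⟶ m)
        (f : (S.Q.obj n).obj Y ⟶ Z) (g : (S.Q.obj m).obj X ⟶ Y),
      (S.Q.map (prodHom φ ψ)).app X ≫ sqComp S f g =
        sqComp S ((S.Q.map φ).app Y ≫ f) ((S.Q.map ψ).app X ≫ g)) ∧
    -- associativity of composition:
    (∀ {X Y Z W : C} {n m l : Cube} (f : (S.Q.obj n).obj Z ⟶ W)
        (g : (S.Q.obj m).obj Y ⟶ Z) (h : (S.Q.obj l).obj X ⟶ Y),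
      sqComp S (sqComp S f g) h =
        (S.Q.map (eqToHom (Nat.add_assoc n m l))).app X ≫ sqComp S f (sqComp S g h)) ∧
    -- right unit law:
    (∀ {X Y : C} {n : Cube} (f : (S.Q.obj n).obj X ⟶ Y),
      sqComp S f (sqId S X) = f) ∧
    -- left unit law:
    (∀ {X Y : C} {m : Cube} (g : (S.Q.obj m).obj X ⟶ Y),
      sqComp S (sqId S Y) g = (S.Q.map (eqToHom (Nat.zero_add m))).app X ≫ g) := by
  refine ⟨?_, ?_, ?_, ?_⟩
  · intro X Y Z n n' m m' φ ψ f g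
    simp only [sqComp, ← Category.assoc]
    rw [hS.natural φ ψ X]
    simp only [Category.assoc, Functor.map_comp, NatTrans.naturality_assoc,
      NatTrans.naturality]
  · intro X Y Z W n m l f g h
    simp only [sqComp]
    slice_lhs 2 3 => rw [(S.α n m).naturality]
    slice_lhs 1 2 => rw [hS.coassoc n m l X]
    simp only [Category.assoc, Functor.comp_map, Functor.map_comp]
  · intro X Y n f
    simp only [sqComp, sqId, ← Category.assoc]
    rw [hS.counit_right n X, Category.id_comp]
  · intro X Y m g
    simp only [sqComp, sqId]
    rw [S.β.naturality, ← Category.assoc, hS.counit_left m X]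
    rfl

end Paper
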